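/- If MPVC-LICQ holds at a feasible point x* ∈ C, then MPVC-MFCQ holds at x*. -/

import Mathlib

open Filter Topology

/-- The MPVC feasible set. -/
def feasSet {n m l q : ℕ} (g : Fin m → (Fin n → ℝ) → ℝ) (h : Fin l → (Fin n → ℝ) → ℝ)
    (G H : Fin q → (Fin n → ℝ) → ℝ) : Set (Fin n → ℝ) :=
  {x | (∀ i, g i x ≤ 0) ∧ (∀ j, h j x = 0) ∧ (∀ i, 0 ≤ H i x) ∧ (∀ i, G i x * H i x ≤ 0)}

/-- MPVC-LICQ at a feasible point: the gradients
`∇g_i (i ∈ I_g), ∇h_j (all j), ∇G_i (i ∈ I_{+0} ∪ I_{00}), ∇H_i (i ∈ I_0)`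
are linearly independent. -/
def MPVC_LICQ {n m l q : ℕ} (g : Fin m → (Fin n → ℝ) → ℝ) (h : Fin l → (Fin n → ℝ) → ℝ)
    (G H : Fin q → (Fin n → ℝ) → ℝ) (xs : Fin n → ℝ) : Prop :=
  LinearIndependent ℝ
    (fun idx : {i : Fin m // g i xs = 0} ⊕ Fin l
        ⊕ {i : Fin q // (0 < H i xs ∧ G i xs = 0) ∨ (H i xs = 0 ∧ G i xs = 0)}
        ⊕ {i : Fin q // H i xs = 0} =>
      Sum.elim (fun i => fderiv ℝ (g i.1) xs)
        (Sum.elim (fun j => fderiv ℝ (h j) xs)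
          (Sum.elim (fun i => fderiv ℝ (G i.1) xs)
            (fun i => fderiv ℝ (H i.1) xs))) idx)

/-- MPVC-MFCQ at a feasible point: the gradients `∇h_j (all j), ∇H_i (i ∈ I_{0+} ∪ I_{00})`
are linearly independent and there is a direction `d` with
`∇h_jᵀd = 0`, `∇H_iᵀd = 0 (i ∈ I_{0+} ∪ I_{00})`, `∇g_iᵀd < 0 (i ∈ I_g)`,
`∇H_iᵀd > 0 (i ∈ I_{0-})`, `∇G_iᵀd < 0 (i ∈ I_{+0} ∪ I_{00})`. -/
def MPVC_MFCQ {n m l q : ℕ} (g : Fin m → (Fin n → ℝ) → ℝ) (h : Fin l → (Fin n → ℝ) → ℝ)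
    (G H : Fin q → (Fin n → ℝ) → ℝ) (xs : Fin n → ℝ) : Prop :=
  LinearIndependent ℝ
    (fun idx : Fin l ⊕ {i : Fin q // H i xs = 0 ∧ 0 ≤ G i xs} =>
      Sum.elim (fun j => fderiv ℝ (h j) xs) (fun i => fderiv ℝ (H i.1) xs) idx)
  ∧ ∃ d : Fin n → ℝ,
      (∀ j, fderiv ℝ (h j) xs d = 0)
      ∧ (∀ i : Fin q, H i xs = 0 ∧ 0 ≤ G i xs → fderiv ℝ (H i) xs d = 0)
      ∧ (∀ i : Fin m, g i xs = 0 → fderiv ℝ (g i) xs d < 0)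
      ∧ (∀ i : Fin q, H i xs = 0 ∧ G i xs < 0 → 0 < fderiv ℝ (H i) xs d)
      ∧ (∀ i : Fin q, (0 < H i xs ∧ G i xs = 0) ∨ (H i xs = 0 ∧ G i xs = 0) →
          fderiv ℝ (G i) xs d < 0)

/-
Everything is linear algebra at `x*`: by LICQ the gradients are linearly independent functionals,
so the derivative map `d ↦ (∇g_i d, ∇h_j d, ∇G_i d, ∇H_i d)` is onto, and `d` may be chosen with
`∇g_i d = -1`, `∇h_j d = 0`, `∇G_i d = -1`, and `∇H_i d` equal to `1` on `I_{0-}` and `0` on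
`I_{0+} ∪ I_{00}`. The MFCQ gradients form a subfamily of the LICQ ones, hence stay independent.
-/

theorem LinearIndependent.exists_forall_apply_eq {ι K V : Type*} [Finite ι] [Field K]
    [AddCommGroup V] [Module K V] {f : ι → Module.Dual K V} (hf : LinearIndependent K f)
    (c : ι → K) : ∃ x, ∀ i, f i x = c i := by
  have hspan : Submodule.span K (Set.range (flip fun i => ⇑(f i))) = ⊤ :=
    span_flip_eq_top_iff_linearIndependent.mpr <|
      hf.map' (LinearMap.ltoFun K V K K) (LinearMap.ker_eq_bot_of_injective LinearMap.coe_injective)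
  have hrange : Set.range (flip fun i => ⇑(f i)) = LinearMap.range (LinearMap.pi f) := by
    ext; simp [flip, funext_iff]
  rw [hrange, Submodule.span_eq, LinearMap.range_eq_top] at hspan
  obtain ⟨x, hx⟩ := hspan c
  exact ⟨x, fun i => congrFun hx i⟩

section MPVC

variable {n m l q : ℕ} {g : Fin m → (Fin n → ℝ) → ℝ} {h : Fin l → (Fin n → ℝ) → ℝ}
  {G H : Fin q → (Fin n → ℝ) → ℝ} {xs : Fin n → ℝ}

theorem MPVC_LICQ.linearIndependent_mfcq_gradients (hlicq : MPVC_LICQ g h G H xs) :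
    LinearIndependent ℝ
      (fun idx : Fin l ⊕ {i : Fin q // H i xs = 0 ∧ 0 ≤ G i xs} =>
        Sum.elim (fun j => fderiv ℝ (h j) xs) (fun i => fderiv ℝ (H i.1) xs) idx) := by
  let toLicqIndex (idx : Fin l ⊕ {i : Fin q // H i xs = 0 ∧ 0 ≤ G i xs}) :
      {i : Fin m // g i xs = 0} ⊕ Fin l
        ⊕ {i : Fin q // (0 < H i xs ∧ G i xs = 0) ∨ (H i xs = 0 ∧ G i xs = 0)}
        ⊕ {i : Fin q // H i xs = 0} :=
    .inr (idx.map id fun i => .inr ⟨i.1, i.2.1⟩)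
  have hinj : Function.Injective toLicqIndex :=
    Sum.inr_injective.comp <| Function.injective_id.sumMap <|
      Sum.inr_injective.comp fun a b hab => Subtype.ext (by simpa using hab)
  convert hlicq.comp toLicqIndex hinj using 1
  funext idx
  rcases idx with j | i <;> rfl

theorem MPVC_LICQ.exists_fderiv_apply_eq (hlicq : MPVC_LICQ g h G H xs)
    (a : {i : Fin m // g i xs = 0} → ℝ) (b : Fin l → ℝ)
    (c : {i : Fin q // (0 < H i xs ∧ G i xs = 0) ∨ (H i xs = 0 ∧ G i xs = 0)} → ℝ)
    (e : {i : Fin q // H i xs = 0} → ℝ) :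
    ∃ d : Fin n → ℝ, (∀ i, fderiv ℝ (g i.1) xs d = a i) ∧ (∀ j, fderiv ℝ (h j) xs d = b j)
      ∧ (∀ i, fderiv ℝ (G i.1) xs d = c i) ∧ (∀ i, fderiv ℝ (H i.1) xs d = e i) := by
  have hli := hlicq.map' (ContinuousLinearMap.coeLM ℝ)
    (LinearMap.ker_eq_bot_of_injective ContinuousLinearMap.coe_injective)
  obtain ⟨d, hd⟩ := hli.exists_forall_apply_eq (Sum.elim a (Sum.elim b (Sum.elim c e)))
  exact ⟨d, fun i => hd (.inl i), fun j => hd (.inr (.inl j)), fun i => hd (.inr (.inr (.inl i))),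
    fun i => hd (.inr (.inr (.inr i)))⟩

end MPVC

theorem MFCQ_of_LICQ_general {n m l q : ℕ}
    (g : Fin m → (Fin n → ℝ) → ℝ) (h : Fin l → (Fin n → ℝ) → ℝ)
    (G H : Fin q → (Fin n → ℝ) → ℝ)
    (xs : Fin n → ℝ)
    (hlicq : MPVC_LICQ g h G H xs) :
    MPVC_MFCQ g h G H xs := by
  obtain ⟨d, hdg, hdh, hdG, hdH⟩ := hlicq.exists_fderiv_apply_eq (fun _ => -1) (fun _ => 0)
    (fun _ => -1) (fun i => if G i.1 xs < 0 then 1 else 0)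
  refine ⟨hlicq.linearIndependent_mfcq_gradients, d, hdh, fun i hi => ?_, fun i hi => ?_,
    fun i hi => ?_, fun i hi => ?_⟩
  · simpa [hi.2.not_gt] using hdH ⟨i, hi.1⟩
  · exact (hdg ⟨i, hi⟩).trans_lt neg_one_lt_zero
  · simp [hdH ⟨i, hi.1⟩, hi.2]
  · exact (hdG ⟨i, hi⟩).trans_lt neg_one_lt_zero

/-- MPVC-LICQ at a feasible point implies MPVC-MFCQ there. -/
theorem MFCQ_of_LICQ {n m l q : ℕ}
    (g : Fin m → (Fin n → ℝ) → ℝ) (h : Fin l → (Fin n → ℝ) → ℝ)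
    (G H : Fin q → (Fin n → ℝ) → ℝ)
    (hg : ∀ i, ContDiff ℝ 1 (g i)) (hh : ∀ j, ContDiff ℝ 1 (h j))
    (hG : ∀ i, ContDiff ℝ 1 (G i)) (hH : ∀ i, ContDiff ℝ 1 (H i))
    (xs : Fin n → ℝ) (hxs : xs ∈ feasSet g h G H)
    (hlicq : MPVC_LICQ g h G H xs) :
    MPVC_MFCQ g h G H xs :=
  MFCQ_of_LICQ_general g h G H xs hlicq
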